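/- arXiv:1911.04087 — 4 statements merged into one kernel-verified Lean document; each statement's English description precedes it below -/
import Mathlib

section
/- Let p : 𝔻 → [1,∞) be a measurable variable exponent with 1 < ess inf_{z∈𝔻} p(z) and ess sup_{z∈𝔻} p(z) < ∞. Suppose there is a constant C > 0 such that the modular inequality ∫_𝔻 |Pf(z)|^{p(z)} dA(z) ≤ C ∫_𝔻 |f(z)|^{p(z)} dA(z) holds for every measurable f : 𝔻 → ℂ with ∫_𝔻 |f(z)|^{p(z)} dA(z) < ∞ (such f are automatically Lebesgue integrable on 𝔻, so Pf is well defined). Then there exists a constant c such that p(z) = c for almost every z ∈ 𝔻. -/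
/-!
For `a < b`, suppose both `B = {p ≤ a}` and `{p ≥ b}` have positive measure, and test the modular
inequality on `f = t • 1_B`. The modular of `f` is at most `t ^ a |B|`. On the other hand
`P f = t • P 1_B`, and `P 1_B` is holomorphic on `𝔻` with `P 1_B (0) = |B| ≠ 0`, so its zero set
is discrete, hence null, and `|P 1_B| ≥ δ` on a subset `A` of `{p ≥ b}` of positive measure.
There the integrand of the modular of `P f` is at least `(t δ) ^ b`, which outgrows `t ^ a` as
`t → ∞`. Hence `p > a` a.e. or `p < b` a.e. for all `a < b`, which forces `p` to be a.e. constant.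
-/

open MeasureTheory Complex Set

noncomputable section

/-- The open unit disc in the complex plane. -/
def unitDisc : Set ℂ := {z : ℂ | ‖z‖ < 1}

/-- The normalized Lebesgue area measure on `ℂ` (Lebesgue measure divided by `π`). -/
def areaD : Measure ℂ := (ENNReal.ofReal Real.pi)⁻¹ • volume

/-- The Bergman projection on the unit disc. -/
def bergmanP (f : ℂ → ℂ) (z : ℂ) : ℂ :=
  ∫ w in unitDisc, f w / (1 - (starRingEnd ℂ) w * z) ^ 2 ∂areaD

open Filter Topology ComplexConjugate
open scoped ENNReal

lemma unitDisc_eq_ball : unitDisc = Metric.ball 0 1 := by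
  ext z; simp [unitDisc]

lemma isOpen_unitDisc : IsOpen unitDisc := unitDisc_eq_ball ▸ Metric.isOpen_ball

lemma isConnected_unitDisc : IsConnected unitDisc :=
  unitDisc_eq_ball ▸ (convex_ball 0 1).isConnected (Metric.nonempty_ball.2 one_pos)

lemma measurableSet_unitDisc : MeasurableSet unitDisc := isOpen_unitDisc.measurableSet

lemma zero_mem_unitDisc : (0 : ℂ) ∈ unitDisc := by simp [unitDisc]

instance : NullSingletonClass areaD := ⟨fun z => by simp [areaD]⟩

instance : IsFiniteMeasure (areaD.restrict unitDisc) :=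
  ⟨by simp [areaD, unitDisc_eq_ball, ENNReal.mul_lt_top_iff, Real.pi_pos]⟩

lemma sub_norm_le_norm_one_sub_conj_mul {w z : ℂ} (hw : ‖w‖ ≤ 1) :
    1 - ‖z‖ ≤ ‖1 - conj w * z‖ :=
  calc 1 - ‖z‖ ≤ 1 - ‖conj w * z‖ := by
        gcongr; rw [norm_mul, Complex.norm_conj]; exact mul_le_of_le_one_left (norm_nonneg z) hw
    _ ≤ ‖1 - conj w * z‖ := by simpa using norm_sub_norm_le (1 : ℂ) (conj w * z)

lemma hasDerivAt_inv_one_sub_conj_mul_sq {w z : ℂ} (hz : 1 - conj w * z ≠ 0) :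
    HasDerivAt (fun z => ((1 - conj w * z) ^ 2)⁻¹) (2 * conj w * ((1 - conj w * z) ^ 3)⁻¹) z := by
  refine ((((hasDerivAt_id' z).const_mul (conj w)).const_sub 1).fun_pow 2 |>.fun_inv
    (pow_ne_zero 2 hz)).congr_deriv ?_
  field_simp
  ring

lemma differentiableOn_integral_inv_one_sub_conj_mul_sq (ν : Measure ℂ) [IsFiniteMeasure ν]
    (hν : ∀ᵐ w ∂ν, ‖w‖ ≤ 1) :
    DifferentiableOn ℂ (fun z => ∫ w, ((1 - conj w * z) ^ 2)⁻¹ ∂ν) unitDisc := by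
  intro z₀ hz₀
  obtain ⟨r, hr_def⟩ : ∃ r, r = (1 - ‖z₀‖) / 2 := ⟨_, rfl⟩
  have hr : 0 < r := by have : ‖z₀‖ < 1 := hz₀; linarith
  have hkernel : ∀ w, ‖w‖ ≤ 1 → ∀ z ∈ Metric.ball z₀ r, r ≤ ‖1 - conj w * z‖ := by
    intro w hw z hz
    have : ‖z‖ ≤ ‖z₀‖ + r := by
      have := norm_le_norm_add_norm_sub' z z₀
      linarith [dist_eq_norm z z₀ ▸ Metric.mem_ball.1 hz]
    linarith [sub_norm_le_norm_one_sub_conj_mul (z := z) hw]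
  have hmeas : ∀ z, AEStronglyMeasurable (fun w : ℂ => ((1 - conj w * z) ^ 2)⁻¹) ν := fun z =>
    (by fun_prop : Measurable fun w : ℂ => ((1 - conj w * z) ^ 2)⁻¹).aestronglyMeasurable
  have hderiv := hasDerivAt_integral_of_dominated_loc_of_deriv_le (μ := ν)
    (bound := fun _ => 2 / r ^ 3) (F' := fun z w => 2 * conj w * ((1 - conj w * z) ^ 3)⁻¹)
    (Metric.ball_mem_nhds z₀ hr)
    (Eventually.of_forall hmeas) ?_ ?_ ?_ (integrable_const _) ?_
  · exact hderiv.2.differentiableAt.differentiableWithinAt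
  · refine (integrable_const ((r ^ 2)⁻¹)).mono' (hmeas z₀) ?_
    filter_upwards [hν] with w hw
    have := hkernel w hw z₀ (Metric.mem_ball_self hr)
    rw [norm_inv, norm_pow]
    gcongr
  · exact (by fun_prop : Measurable fun w : ℂ => 2 * conj w * ((1 - conj w * z₀) ^ 3)⁻¹)
      |>.aestronglyMeasurable
  · filter_upwards [hν] with w hw z hz
    have := hkernel w hw z hz
    rw [norm_mul, norm_mul, norm_inv, norm_pow, Complex.norm_conj, Complex.norm_two,
      div_eq_mul_inv]
    gcongr
    linarith
  · filter_upwards [hν] with w hw z hz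
    exact hasDerivAt_inv_one_sub_conj_mul_sq (norm_pos_iff.1 (hr.trans_le (hkernel w hw z hz)))

section Modular

variable {α E : Type*} [MeasurableSpace α] [NormedAddCommGroup E] {μ : Measure α} {p : α → ℝ}

lemma lintegral_ofReal_norm_indicator_rpow_le {S : Set α} (hS : MeasurableSet S) {c : E}
    (hc : 1 ≤ ‖c‖) {a : ℝ} (hp : ∀ᵐ x ∂μ, 0 < p x) (hpa : ∀ x ∈ S, p x ≤ a) :
    ∫⁻ x, ENNReal.ofReal (‖S.indicator (fun _ => c) x‖ ^ p x) ∂μ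
      ≤ ENNReal.ofReal (‖c‖ ^ a) * μ S := by
  rw [← setLIntegral_const, ← lintegral_indicator hS]
  refine lintegral_mono_ae (hp.mono fun x hpx => ?_)
  by_cases hx : x ∈ S
  · simp only [indicator_of_mem hx]
    exact ENNReal.ofReal_le_ofReal (Real.rpow_le_rpow_of_exponent_le hc (hpa x hx))
  · simp [indicator_of_notMem hx, Real.zero_rpow hpx.ne']

lemma ofReal_rpow_mul_le_lintegral {A : Set α} (hA : NullMeasurableSet A μ) {F : α → E}
    {s b : ℝ} (hs : 1 ≤ s) (hp : ∀ᵐ x ∂μ, 0 ≤ p x) (hF : ∀ x ∈ A, s ≤ ‖F x‖ ∧ b ≤ p x) :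
    ENNReal.ofReal (s ^ b) * μ A ≤ ∫⁻ x, ENNReal.ofReal (‖F x‖ ^ p x) ∂μ := by
  rw [← setLIntegral_const]
  refine (lintegral_mono_ae ?_).trans (setLIntegral_le_lintegral _ _)
  filter_upwards [ae_restrict_mem₀ hA, ae_restrict_of_ae hp] with x hx hpx
  obtain ⟨hsF, hbp⟩ := hF x hx
  exact ENNReal.ofReal_le_ofReal <| (Real.rpow_le_rpow_of_exponent_le hs hbp).trans
    (Real.rpow_le_rpow (zero_le_one.trans hs) hsF hpx)

end Modular

lemma exists_pos_measure_inter_le_ne_zero {α : Type*} [MeasurableSpace α] {μ : Measure α}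
    {S : Set α} {h : α → ℝ} (hS : μ S ≠ 0) (hh : ∀ᵐ x ∂μ, 0 < h x) :
    ∃ δ > 0, μ (S ∩ {x | δ ≤ h x}) ≠ 0 := by
  by_contra! hnull
  refine hS (measure_mono_null_ae ?_ (measure_iUnion_null fun n : ℕ =>
    hnull (1 / (n + 1)) Nat.one_div_pos_of_nat))
  filter_upwards [hh] with x hx hxS
  obtain ⟨n, hn⟩ := exists_nat_one_div_lt hx
  exact mem_iUnion.2 ⟨n, hxS, hn.le⟩

lemma not_eventually_mul_rpow_le {a b : ℝ} (hab : a < b) {c : ℝ} (hc : 0 < c) (K : ℝ) :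
    ¬ ∀ᶠ t in atTop, c * t ^ b ≤ K * t ^ a := by
  intro h
  have hgrowth := ((tendsto_rpow_atTop (sub_pos.2 hab)).const_mul_atTop hc).eventually_gt_atTop K
  obtain ⟨t, hle, hlt, ht⟩ := (h.and (hgrowth.and (eventually_gt_atTop 0))).exists
  have hsplit : c * t ^ b = c * t ^ (b - a) * t ^ a := by
    rw [mul_assoc, ← Real.rpow_add ht, sub_add_cancel]
  exact (mul_lt_mul_of_pos_right hlt (Real.rpow_pos_of_pos ht a)).not_ge (hsplit ▸ hle)

lemma ae_integral_inv_one_sub_conj_mul_sq_ne_zero (μ : Measure ℂ) [NullSingletonClass μ]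
    (ν : Measure ℂ) [IsFiniteMeasure ν] (hν : ∀ᵐ w ∂ν, ‖w‖ ≤ 1) (hν₀ : ν ≠ 0) :
    ∀ᵐ z ∂μ.restrict unitDisc, ∫ w, ((1 - conj w * z) ^ 2)⁻¹ ∂ν ≠ 0 := by
  have hg := (differentiableOn_integral_inv_one_sub_conj_mul_sq ν hν).analyticOnNhd
    isOpen_unitDisc
  have hg₀ : ∫ w, ((1 - conj w * 0) ^ 2)⁻¹ ∂ν ≠ 0 := by
    simpa [measureReal_def, ENNReal.toReal_eq_zero_iff] using hν₀
  exact ae_restrict_le_codiscreteWithin measurableSet_unitDisc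
    (hg.preimage_zero_mem_codiscreteWithin hg₀ zero_mem_unitDisc isConnected_unitDisc)

lemma bergmanP_indicator_const {B : Set ℂ} (hB : MeasurableSet B) (c z : ℂ) :
    bergmanP (B.indicator fun _ => c) z
      = c * ∫ w in B, ((1 - conj w * z) ^ 2)⁻¹ ∂areaD.restrict unitDisc := by
  rw [bergmanP, ← integral_const_mul, ← integral_indicator hB]
  congr 1 with w
  by_cases hw : w ∈ B <;> simp [hw, div_eq_mul_inv]

/-- The modular `∫_𝔻 |f|^p dA` of the variable exponent Lebesgue space `L^{p(·)}(𝔻)`. -/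
def discModular (p : ℂ → ℝ) (f : ℂ → ℂ) : ℝ≥0∞ :=
  ∫⁻ z in unitDisc, ENNReal.ofReal (‖f z‖ ^ p z) ∂areaD

def BergmanModularInequality (p : ℂ → ℝ) (K : ℝ≥0∞) : Prop :=
  ∀ f : ℂ → ℂ, Measurable f → discModular p f < ⊤ →
    discModular p (bergmanP f) ≤ K * discModular p f

section ModularInequality

variable {p : ℂ → ℝ} {K : ℝ≥0∞}

/-- The modular inequality tested on `t • 1_B`. -/
lemma BergmanModularInequality.rpow_mul_measureReal_le (hmod : BergmanModularInequality p K)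
    (hK : K ≠ ⊤) (hp : ∀ᵐ z ∂areaD.restrict unitDisc, 0 < p z) {a b δ t : ℝ} {A B : Set ℂ}
    (hB : MeasurableSet B) (hpB : ∀ z ∈ B, p z ≤ a)
    (hA : NullMeasurableSet A (areaD.restrict unitDisc))
    (hpA : ∀ z ∈ A, δ ≤ ‖∫ w in B, ((1 - conj w * z) ^ 2)⁻¹ ∂areaD.restrict unitDisc‖ ∧ b ≤ p z)
    (ht : 1 ≤ t) (htδ : 1 ≤ t * δ) :
    (t * δ) ^ b * (areaD.restrict unitDisc).real A
      ≤ K.toReal * (t ^ a * (areaD.restrict unitDisc).real B) := by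
  set ν := areaD.restrict unitDisc
  have ht₀ : 0 < t := zero_lt_one.trans_le ht
  have hnorm : ‖(t : ℂ)‖ = t := Complex.norm_of_nonneg ht₀.le
  set f : ℂ → ℂ := B.indicator fun _ => (t : ℂ)
  have hupper : discModular p f ≤ ENNReal.ofReal (t ^ a) * ν B := by
    have := lintegral_ofReal_norm_indicator_rpow_le (c := (t : ℂ)) hB (by rwa [hnorm]) hp hpB
    rwa [hnorm] at this
  have hlower : ENNReal.ofReal ((t * δ) ^ b) * ν A ≤ discModular p (bergmanP f) := by
    refine ofReal_rpow_mul_le_lintegral hA htδ (hp.mono fun _ h => h.le)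
      fun z hz => ⟨?_, (hpA z hz).2⟩
    rw [bergmanP_indicator_const hB, norm_mul, hnorm]
    exact mul_le_mul_of_nonneg_left (hpA z hz).1 ht₀.le
  have hfin : ENNReal.ofReal (t ^ a) * ν B ≠ ⊤ :=
    ENNReal.mul_ne_top ENNReal.ofReal_ne_top (measure_ne_top ν B)
  have hchain := hlower.trans <| (hmod f (measurable_const.indicator hB)
    (hupper.trans_lt hfin.lt_top)).trans (mul_le_mul_right hupper K)
  have hreal := ENNReal.toReal_mono (ENNReal.mul_ne_top hK hfin) hchain
  rwa [ENNReal.toReal_mul, ENNReal.toReal_mul, ENNReal.toReal_mul,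
    ENNReal.toReal_ofReal (by positivity), ENNReal.toReal_ofReal (by positivity)] at hreal

theorem BergmanModularInequality.ae_lt_or_ae_lt (hmod : BergmanModularInequality p K)
    (hK : K ≠ ⊤) (hp : ∀ᵐ z ∂areaD.restrict unitDisc, 0 < p z) (hpm : Measurable p)
    {a b : ℝ} (hab : a < b) :
    (∀ᵐ z ∂areaD.restrict unitDisc, a < p z) ∨ ∀ᵐ z ∂areaD.restrict unitDisc, p z < b := by
  set ν := areaD.restrict unitDisc
  set B := {z | p z ≤ a}
  have hBm : MeasurableSet B := measurableSet_le hpm measurable_const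
  simp only [← not_le, ae_iff, not_not]
  rw [or_iff_not_imp_left]
  intro hB
  by_contra hA
  have hνB : ∀ᵐ w ∂ν.restrict B, ‖w‖ ≤ 1 :=
    ae_restrict_of_ae ((ae_restrict_mem measurableSet_unitDisc).mono fun w hw => le_of_lt hw)
  set g := fun z => ∫ w in B, ((1 - conj w * z) ^ 2)⁻¹ ∂ν
  have hg : ∀ᵐ z ∂ν, 0 < ‖g z‖ := by
    filter_upwards [ae_integral_inv_one_sub_conj_mul_sq_ne_zero areaD (ν.restrict B) hνB
      (by rwa [Ne, Measure.restrict_eq_zero])] with z hz using norm_pos_iff.2 hz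
  obtain ⟨δ, hδ, hA'⟩ := exists_pos_measure_inter_le_ne_zero hA hg
  set A := {z | b ≤ p z} ∩ {z | δ ≤ ‖g z‖}
  have hAm : NullMeasurableSet A ν :=
    (measurableSet_le measurable_const hpm).nullMeasurableSet.inter <| nullMeasurableSet_le
      aemeasurable_const ((differentiableOn_integral_inv_one_sub_conj_mul_sq _ hνB).continuousOn
        |>.aemeasurable measurableSet_unitDisc).norm
  refine not_eventually_mul_rpow_le hab (c := δ ^ b * ν.real A)
    (mul_pos (Real.rpow_pos_of_pos hδ b) (ENNReal.toReal_pos hA' (measure_ne_top ν A)))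
    (K.toReal * ν.real B) ?_
  filter_upwards [eventually_ge_atTop 1, eventually_ge_atTop δ⁻¹] with t ht htδ
  have htδ' : 1 ≤ t * δ := by
    simpa [inv_mul_cancel₀ hδ.ne'] using mul_le_mul_of_nonneg_right htδ hδ.le
  have := hmod.rpow_mul_measureReal_le hK hp hBm (fun _ hz => hz) hAm (fun z hz => ⟨hz.2, hz.1⟩)
    ht htδ'
  rw [Real.mul_rpow (zero_le_one.trans ht) hδ.le] at this
  linear_combination this

end ModularInequality

lemma exists_ae_eq_const_of_forall_lt {α : Type*} [MeasurableSpace α] {μ : Measure α}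
    {p : α → ℝ} (h : ∀ a b, a < b → (∀ᵐ x ∂μ, a < p x) ∨ ∀ᵐ x ∂μ, p x < b) :
    ∃ c, ∀ᵐ x ∂μ, p x = c := by
  refine exists_eventuallyEq_const_of_forall_separating (l := ae μ) (f := p)
    (· ∈ range (Iic : ℝ → Set ℝ)) ?_
  rintro _ ⟨q, rfl⟩
  by_cases hq : ∀ᵐ x ∂μ, q < p x
  · exact Or.inr (hq.mono fun x hx => not_le.2 hx)
  · have hlt : ∀ n : ℕ, ∀ᵐ x ∂μ, p x < q + 1 / (n + 1) := fun n =>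
      (h q _ (lt_add_of_pos_right q Nat.one_div_pos_of_nat)).resolve_left hq
    refine Or.inl ((ae_all_iff.2 hlt).mono fun x hx =>
      mem_Iic.2 <| le_of_forall_pos_lt_add fun ε hε => ?_)
    obtain ⟨n, hn⟩ := exists_nat_one_div_lt hε
    linarith [hx n]

theorem modular_inequality_bergman_implies_constant_exponent_general
    (p : ℂ → ℝ) (hpm : Measurable p)
    (hp1 : ∀ z ∈ unitDisc, 1 ≤ p z)
    (C : ℝ)
    (hmod : ∀ f : ℂ → ℂ, Measurable f →
      (∫⁻ z in unitDisc, ENNReal.ofReal (‖f z‖ ^ p z) ∂areaD) < ⊤ →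
      (∫⁻ z in unitDisc, ENNReal.ofReal (‖bergmanP f z‖ ^ p z) ∂areaD)
        ≤ ENNReal.ofReal C *
          ∫⁻ z in unitDisc, ENNReal.ofReal (‖f z‖ ^ p z) ∂areaD) :
    ∃ c : ℝ, ∀ᵐ z ∂(areaD.restrict unitDisc), p z = c := by
  have hp : ∀ᵐ z ∂areaD.restrict unitDisc, 0 < p z :=
    (ae_restrict_iff' measurableSet_unitDisc).2 (.of_forall fun z hz => one_pos.trans_le (hp1 z hz))
  exact exists_ae_eq_const_of_forall_lt fun _ _ hab =>
    BergmanModularInequality.ae_lt_or_ae_lt hmod ENNReal.ofReal_ne_top hp hpm hab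

theorem modular_inequality_bergman_implies_constant_exponent
    (p : ℂ → ℝ) (hpm : Measurable p)
    (hp1 : ∀ z ∈ unitDisc, 1 ≤ p z)
    (hinf : 1 < essInf p (areaD.restrict unitDisc))
    (hsup : ∃ M : ℝ, ∀ᵐ z ∂(areaD.restrict unitDisc), p z ≤ M)
    (C : ℝ) (hC : 0 < C)
    (hmod : ∀ f : ℂ → ℂ, Measurable f →
      (∫⁻ z in unitDisc, ENNReal.ofReal (‖f z‖ ^ p z) ∂areaD) < ⊤ →
      (∫⁻ z in unitDisc, ENNReal.ofReal (‖bergmanP f z‖ ^ p z) ∂areaD)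
        ≤ ENNReal.ofReal C *
          ∫⁻ z in unitDisc, ENNReal.ofReal (‖f z‖ ^ p z) ∂areaD) :
    ∃ c : ℝ, ∀ᵐ z ∂(areaD.restrict unitDisc), p z = c :=
  modular_inequality_bergman_implies_constant_exponent_general p hpm hp1 C hmod
end
end

section
/- Let τ ∈ ℝ²₊ (i.e., τ ∈ ℂ with Im τ > 0). Then there exist a compact set K ⊆ ℝ²₊ that is a neighborhood of τ (i.e., τ lies in the interior of K relative to ℂ) and a constant c > 0 such that for every measurable set E ⊆ K and every z ∈ K one has Re(B_{ℝ²₊}χ_E(z)) ≥ c·|E|, where |E| is the Lebesgue area measure of E and χ_E is the characteristic function of E. -/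
/-!
The kernel `w ↦ -1 / (π (z - w̄)²)` of `bergmanUHP` is continuous in `(z, w)` on the upper
half-plane and its real part at `(τ, τ)` is `1 / (4π (Im τ)²) > 0`. Hence on a small closed ball
`K` around `τ` the real part of the kernel stays above `1 / (8π (Im τ)²)` for all `z, w ∈ K`, and
integrating this bound over `E ⊆ K` gives the claim.
-/

open MeasureTheory Complex Set

noncomputable section

/-- The open upper half-plane in `ℂ`. -/
def upperHalf : Set ℂ := {z : ℂ | 0 < z.im}

/-- The Bergman-type projection on the upper half-plane. -/
def bergmanUHP (f : ℂ → ℂ) (z : ℂ) : ℂ :=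
  (-(1 / (Real.pi : ℂ))) * ∫ w in upperHalf, f w / (z - (starRingEnd ℂ) w) ^ 2

open Filter Topology

lemma Metric.exists_closedBall_forall_of_eventually_nhds_diag {X : Type*} [PseudoMetricSpace X]
    {a : X} {P : X × X → Prop} (h : ∀ᶠ p in 𝓝 (a, a), P p) :
    ∃ r > 0, ∀ z ∈ Metric.closedBall a r, ∀ w ∈ Metric.closedBall a r, P (z, w) := by
  rw [nhds_prod_eq, (Metric.nhds_basis_closedBall.prod_self).eventually_iff] at h
  obtain ⟨r, hr, hP⟩ := h
  exact ⟨r, hr, fun z hz w hw => hP (mk_mem_prod hz hw)⟩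

lemma isOpen_upperHalf : IsOpen upperHalf :=
  isOpen_lt continuous_const continuous_im

lemma sub_conj_ne_zero_of_mem_upperHalf {z w : ℂ} (hz : z ∈ upperHalf) (hw : w ∈ upperHalf) :
    z - starRingEnd ℂ w ≠ 0 := by
  intro h
  have := congrArg im h
  simp only [sub_im, conj_im, sub_neg_eq_add, zero_im] at this
  exact (add_pos hz hw).ne' this

def bergmanKernelUHP (z w : ℂ) : ℂ :=
  -(1 / (Real.pi : ℂ)) / (z - starRingEnd ℂ w) ^ 2

lemma bergmanKernelUHP_self (z : ℂ) :
    bergmanKernelUHP z z = ((4 * Real.pi * z.im ^ 2)⁻¹ : ℝ) := by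
  have h : z - starRingEnd ℂ z = 2 * z.im * I := by
    apply Complex.ext <;> simp; ring
  rw [bergmanKernelUHP, h]
  push_cast
  rw [mul_pow, mul_pow, I_sq]
  field_simp
  ring

lemma continuousOn_bergmanKernelUHP :
    ContinuousOn (fun p : ℂ × ℂ => bergmanKernelUHP p.1 p.2) (upperHalf ×ˢ upperHalf) :=
  continuousOn_const.div
    ((continuous_fst.sub (continuous_conj.comp continuous_snd)).pow 2).continuousOn
    fun _ hp => pow_ne_zero 2 (sub_conj_ne_zero_of_mem_upperHalf hp.1 hp.2)

lemma integrableOn_bergmanKernelUHP {z : ℂ} (hz : z ∈ upperHalf) {K : Set ℂ}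
    (hK : IsCompact K) (hKU : K ⊆ upperHalf) : IntegrableOn (bergmanKernelUHP z) K := by
  have hmaps : MapsTo (fun w => (z, w)) K (upperHalf ×ˢ upperHalf) := fun _ hw => ⟨hz, hKU hw⟩
  exact (continuousOn_bergmanKernelUHP.comp (Continuous.prodMk_right z).continuousOn
    hmaps).integrableOn_compact hK

lemma bergmanUHP_indicator {E : Set ℂ} (hE : MeasurableSet E) (hEU : E ⊆ upperHalf) (z : ℂ) :
    bergmanUHP (E.indicator fun _ => 1) z = ∫ w in E, bergmanKernelUHP z w := by
  have h : (fun w => E.indicator (fun _ => (1 : ℂ)) w / (z - starRingEnd ℂ w) ^ 2) =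
      E.indicator fun w => 1 / (z - starRingEnd ℂ w) ^ 2 := by
    ext w; by_cases hw : w ∈ E <;> simp [hw]
  rw [bergmanUHP, h, setIntegral_indicator hE, inter_eq_self_of_subset_right hEU,
    ← integral_const_mul]
  simp_rw [mul_one_div, bergmanKernelUHP]

lemma eventually_mem_upperHalf_and_re_bergmanKernelUHP_gt {τ : ℂ} (hτ : τ ∈ upperHalf) :
    ∀ᶠ p in 𝓝 (τ, τ),
      p.1 ∈ upperHalf ∧ (8 * Real.pi * τ.im ^ 2)⁻¹ < (bergmanKernelUHP p.1 p.2).re := by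
  have hcont : ContinuousAt (fun p : ℂ × ℂ => (bergmanKernelUHP p.1 p.2).re) (τ, τ) :=
    continuous_re.continuousAt.comp <| continuousOn_bergmanKernelUHP.continuousAt <|
      (isOpen_upperHalf.prod isOpen_upperHalf).mem_nhds ⟨hτ, hτ⟩
  have hlt : (8 * Real.pi * τ.im ^ 2)⁻¹ < (bergmanKernelUHP τ τ).re := by
    have : 0 < τ.im := hτ
    rw [bergmanKernelUHP_self, ofReal_re]
    gcongr; linarith [Real.pi_pos]
  exact (continuous_fst.continuousAt.eventually_mem (isOpen_upperHalf.mem_nhds hτ)).and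
    (hcont.eventually_const_lt hlt)

theorem bergmanUHP_lower_pointwise_bound (τ : ℂ) (hτ : τ ∈ upperHalf) :
    ∃ K : Set ℂ, K ⊆ upperHalf ∧ IsCompact K ∧ τ ∈ interior K ∧
      ∃ c : ℝ, 0 < c ∧
        ∀ E : Set ℂ, MeasurableSet E → E ⊆ K → ∀ z ∈ K,
          c * (volume E).toReal ≤ (bergmanUHP (E.indicator fun _ => (1 : ℂ)) z).re := by
  obtain ⟨r, hr, hK⟩ := Metric.exists_closedBall_forall_of_eventually_nhds_diag
    (eventually_mem_upperHalf_and_re_bergmanKernelUHP_gt hτ)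
  have hKU : Metric.closedBall τ r ⊆ upperHalf := fun z hz => (hK z hz z hz).1
  have hτim : 0 < τ.im := hτ
  refine ⟨_, hKU, isCompact_closedBall τ r,
    Metric.ball_subset_interior_closedBall (Metric.mem_ball_self hr),
    (8 * Real.pi * τ.im ^ 2)⁻¹, by positivity, ?_⟩
  intro E hE hEK z hz
  have hint : IntegrableOn (bergmanKernelUHP z) E :=
    (integrableOn_bergmanKernelUHP (hKU hz) (isCompact_closedBall τ r) hKU).mono_set hEK
  calc _ ≤ ∫ w in E, (bergmanKernelUHP z w).re :=
        setIntegral_ge_of_const_le_real hE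
          (measure_mono hEK |>.trans_lt (isCompact_closedBall τ r).measure_lt_top).ne
          (fun w hw => (hK z hz w (hEK hw)).2.le) hint.re
    _ = (∫ w in E, bergmanKernelUHP z w).re := integral_re hint
    _ = _ := by rw [bergmanUHP_indicator hE (hEK.trans hKU)]

end
end

section
/- Let α ∈ ℝ, β > 0 and 0 < γ < β, and let K = { x + iy ∈ ℂ : α − (β−γ)/2 ≤ x ≤ α + (β−γ)/2 and β − γ ≤ y ≤ β + γ }. Then there exists a constant c > 0 such that −(1/π)·Re(1/(z − w̄)²) ≥ c for all z, w ∈ K. -/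
/-! Writing `z - w̄ = x + iy`, one has `-Re(1/(z - w̄)²) = (y² - x²)/(x² + y²)²`. On `K × K` the
real part `x = Re z - Re w` is at most `β - γ` in absolute value, while the imaginary part
`y = Im z + Im w` lies in `[2(β - γ), 2(β + γ)]`; so the numerator is at least `3(β - γ)²` and the
denominator is bounded above. -/

open Complex

theorem Complex.neg_re_one_div_sq (u : ℂ) :
    -(1 / u ^ 2).re = (u.im ^ 2 - u.re ^ 2) / (u.re ^ 2 + u.im ^ 2) ^ 2 := by
  rw [one_div, inv_re, map_pow, normSq_apply, sq u, mul_re]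
  ring

theorem Complex.div_le_neg_re_one_div_sq {u : ℂ} {a b B : ℝ} (hre : |u.re| ≤ a)
    (hb : b ≤ u.im) (hB : u.im ≤ B) (hab : a < b) :
    (b ^ 2 - a ^ 2) / (a ^ 2 + B ^ 2) ^ 2 ≤ -(1 / u ^ 2).re := by
  have ha : 0 ≤ a := (abs_nonneg _).trans hre
  have hre_sq : u.re ^ 2 ≤ a ^ 2 := sq_le_sq' (abs_le.mp hre).1 (abs_le.mp hre).2
  have him_sq : b ^ 2 ≤ u.im ^ 2 := pow_le_pow_left₀ (by linarith) hb 2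
  have him_sq' : u.im ^ 2 ≤ B ^ 2 := pow_le_pow_left₀ (by linarith) hB 2
  have hab_sq : a ^ 2 < b ^ 2 := pow_lt_pow_left₀ hab ha two_ne_zero
  rw [neg_re_one_div_sq]
  apply div_le_div₀ (by linarith) (by linarith) (pow_pos (by nlinarith) 2)
  exact pow_le_pow_left₀ (by positivity) (by linarith) 2

theorem kernel_lower_bound_on_rectangle_general (α β γ : ℝ) (hγβ : γ < β)
    (K : Set ℂ)
    (hK : K = {z : ℂ | α - (β - γ) / 2 ≤ z.re ∧ z.re ≤ α + (β - γ) / 2 ∧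
      β - γ ≤ z.im ∧ z.im ≤ β + γ}) :
    ∃ c : ℝ, 0 < c ∧ ∀ z ∈ K, ∀ w ∈ K,
      c ≤ -(1 / Real.pi) * (1 / (z - (starRingEnd ℂ) w) ^ 2).re := by
  subst hK
  set d := β - γ
  have hd : 0 < d := sub_pos.mpr hγβ
  refine ⟨1 / Real.pi * (((2 * d) ^ 2 - d ^ 2) / (d ^ 2 + (2 * (β + γ)) ^ 2) ^ 2),
    mul_pos (by positivity) (div_pos (by nlinarith) (by positivity)), ?_⟩
  rintro z ⟨hz₁, hz₂, hz₃, hz₄⟩ w ⟨hw₁, hw₂, hw₃, hw₄⟩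
  have hre : |(z - (starRingEnd ℂ) w).re| ≤ d := by
    rw [sub_re, conj_re, abs_le]
    constructor <;> linarith
  have him : (z - (starRingEnd ℂ) w).im = z.im + w.im := by
    rw [sub_im, conj_im, sub_neg_eq_add]
  calc _ ≤ 1 / Real.pi * -(1 / (z - (starRingEnd ℂ) w) ^ 2).re :=
        mul_le_mul_of_nonneg_left
          (div_le_neg_re_one_div_sq hre (by linarith) (by linarith) (by linarith))
          (by positivity)
    _ = _ := by ring

theorem kernel_lower_bound_on_rectangle (α β γ : ℝ) (hβ : 0 < β) (hγ0 : 0 < γ) (hγβ : γ < β)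
    (K : Set ℂ)
    (hK : K = {z : ℂ | α - (β - γ) / 2 ≤ z.re ∧ z.re ≤ α + (β - γ) / 2 ∧
      β - γ ≤ z.im ∧ z.im ≤ β + γ}) :
    ∃ c : ℝ, 0 < c ∧ ∀ z ∈ K, ∀ w ∈ K,
      c ≤ -(1 / Real.pi) * (1 / (z - (starRingEnd ℂ) w) ^ 2).re :=
  kernel_lower_bound_on_rectangle_general α β γ hγβ K hK
end

section
/- Let n ≥ 2 and let p : ℝⁿ₊ → [1,∞) be a measurable variable exponent with 1 < ess inf_{x∈ℝⁿ₊} p(x) and ess sup_{x∈ℝⁿ₊} p(x) < ∞. Suppose there is a constant C > 0 such that the modular inequality ∫_{ℝⁿ₊} |b_{ℝⁿ₊}f(x)|^{p(x)} dx ≤ C ∫_{ℝⁿ₊} |f(x)|^{p(x)} dx holds for every measurable f : ℝⁿ₊ → ℝ with ∫_{ℝⁿ₊} |f(x)|^{p(x)} dx < ∞ and such that y ↦ R(x,y)f(y) is Lebesgue integrable on ℝⁿ₊ for every x ∈ ℝⁿ₊. Then there exists a constant c such that p(x) = c for almost every x ∈ ℝⁿ₊. -/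
open MeasureTheory Set

noncomputable section

/-- The last coordinate of a point of `ℝⁿ`. -/
def lastCoord {n : ℕ} (x : EuclideanSpace ℝ (Fin n)) : ℝ :=
  if h : n - 1 < n then x ⟨n - 1, h⟩ else 0

/-- Reflection in the hyperplane `xₙ = 0`: negate the last coordinate. -/
def reflectLast {n : ℕ} (y : EuclideanSpace ℝ (Fin n)) : EuclideanSpace ℝ (Fin n) :=
  WithLp.toLp 2 (fun i => if (i : ℕ) = n - 1 then -y i else y i)

/-- The open upper half-space `ℝⁿ₊`. -/
def upperHalfSpace (n : ℕ) : Set (EuclideanSpace ℝ (Fin n)) :=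
  {x | 0 < lastCoord x}

/-- The harmonic Bergman kernel of the upper half-space. -/
def harmonicKernel {n : ℕ} (x y : EuclideanSpace ℝ (Fin n)) : ℝ :=
  (2 / Real.pi ^ ((n : ℝ) / 2)) * Real.Gamma ((n : ℝ) / 2) *
    (((n : ℝ) * (lastCoord x + lastCoord y) ^ 2 - ‖x - reflectLast y‖ ^ 2) /
      ‖x - reflectLast y‖ ^ (n + 2))

/-- The harmonic Bergman projection of the upper half-space. -/
def harmonicBergman {n : ℕ} (f : EuclideanSpace ℝ (Fin n) → ℝ)
    (x : EuclideanSpace ℝ (Fin n)) : ℝ :=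
  ∫ y in upperHalfSpace n, harmonicKernel x y * f y

/-!
If `p` is not a.e. constant, there are `a < b` such that `{p < a}` and `{p > b}` both have positive
measure. The kernel `R` is continuous off `x = ȳ`, and for `y₁ ≠ y₂` the zero sets of `R(·, y₁)` and
`R(·, y₂)` meet inside a hyperplane; so there are support points `x₀` of `{p < a}` and `y₀` of
`{p > b}` with `R(x₀, y₀) ≠ 0`, and small balls around them, meeting these sets in `S_A` and `S_B`,
on which `R` keeps the sign and size of `R(x₀, y₀)`; hence `|∫_{S_B} R(x, y) dy| ≥ c > 0` for
`x ∈ S_A`. Testing the modular inequality with `f = t 𝟙_{S_B}` gives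
`(c t)^a |S_A| ≤ C t^b |S_B|`, which fails as `t → 0⁺` because `a < b`.
-/

open scoped ENNReal InnerProductSpace Topology
open Filter

theorem eventually_mul_rpow_lt_mul_rpow {a b L : ℝ} (hab : a < b) (hL : 0 < L) (K : ℝ) :
    ∀ᶠ t in 𝓝[>] (0 : ℝ), K * t ^ b < L * t ^ a := by
  have hlim : Tendsto (fun t : ℝ => K * t ^ (b - a)) (𝓝[>] 0) (𝓝 0) := by
    have := (Real.continuousAt_rpow_const 0 (b - a) (Or.inr (sub_pos.2 hab).le)).const_mul K
    simpa [Real.zero_rpow (sub_pos.2 hab).ne'] using this.tendsto.mono_left nhdsWithin_le_nhds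
  filter_upwards [hlim.eventually (gt_mem_nhds hL), self_mem_nhdsWithin] with t ht (ht0 : 0 < t)
  calc K * t ^ b = K * t ^ (b - a) * t ^ a := by
        rw [mul_assoc, ← Real.rpow_add ht0, sub_add_cancel]
    _ < L * t ^ a := mul_lt_mul_of_pos_right ht (Real.rpow_pos_of_pos ht0 a)

section Measure

variable {α : Type*} [MeasurableSpace α] {μ : Measure α}

theorem exists_lt_measure_lt_ne_zero_of_not_ae_eq_const {f : α → ℝ}
    (h : ¬ ∃ c, ∀ᵐ x ∂μ, f x = c) :
    ∃ a b, a < b ∧ μ {x | f x < a} ≠ 0 ∧ μ {x | b < f x} ≠ 0 := by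
  set g : α → EReal := fun x => f x
  rcases lt_or_ge (essInf g μ) (essSup g μ) with hlt | hle
  · obtain ⟨a, hia, has⟩ := EReal.exists_between_coe_real hlt
    obtain ⟨b, hab, hbs⟩ := EReal.exists_between_coe_real has
    refine ⟨a, b, EReal.coe_lt_coe_iff.1 hab, fun h0 => hia.not_ge ?_, fun h0 => hbs.not_ge ?_⟩
    · refine le_essInf_of_ae_le _ (measure_eq_zero_iff_ae_notMem.1 h0 |>.mono fun x hx => ?_)
      simpa [g] using hx
    · refine essSup_le_of_ae_le _ (measure_eq_zero_iff_ae_notMem.1 h0 |>.mono fun x hx => ?_)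
      simpa [g] using hx
  · refine absurd ⟨(essSup g μ).toReal, ?_⟩ h
    filter_upwards [ae_le_essSup (f := g), ae_essInf_le (f := g)] with x hsup hinf
    rw [← le_antisymm hsup (hle.trans hinf)]
    rfl

theorem le_abs_setIntegral_of_abs_sub_le {f : α → ℝ} {s : Set α} {κ δ : ℝ} (hs : μ s ≠ ∞)
    (hf : IntegrableOn f s μ) (h : ∀ x ∈ s, |f x - κ| ≤ δ) :
    (|κ| - δ) * μ.real s ≤ |∫ x in s, f x ∂μ| := by
  have hdev : |∫ x in s, f x ∂μ - κ * μ.real s| ≤ δ * μ.real s := by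
    have := norm_setIntegral_le_of_norm_le_const hs.lt_top (f := fun x => f x - κ) h
    rwa [integral_sub hf (integrableOn_const hs), setIntegral_const, smul_eq_mul, mul_comm] at this
  calc (|κ| - δ) * μ.real s = |κ * μ.real s| - δ * μ.real s := by
        rw [abs_mul, abs_of_nonneg measureReal_nonneg]
        ring
    _ ≤ |∫ x in s, f x ∂μ| := by
        linarith [abs_sub_abs_le_abs_sub (κ * μ.real s) (∫ x in s, f x ∂μ),
          abs_sub_comm (κ * μ.real s) (∫ x in s, f x ∂μ)]

theorem setLIntegral_rpow_indicator_const_le {H s : Set α} {p : α → ℝ} {t b : ℝ}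
    (hH : MeasurableSet H) (hs : MeasurableSet s) (ht₀ : 0 < t) (ht₁ : t ≤ 1)
    (hp : ∀ x ∈ H, 0 < p x) (hb : ∀ x ∈ s, b ≤ p x) :
    ∫⁻ x in H, ENNReal.ofReal (|s.indicator (fun _ => t) x| ^ p x) ∂μ ≤
      ENNReal.ofReal (t ^ b) * μ s := by
  calc ∫⁻ x in H, ENNReal.ofReal (|s.indicator (fun _ => t) x| ^ p x) ∂μ
      ≤ ∫⁻ x in H, s.indicator (fun _ => ENNReal.ofReal (t ^ b)) x ∂μ := by
        refine setLIntegral_mono' hH fun x hx => ?_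
        by_cases hxs : x ∈ s
        · rw [indicator_of_mem hxs, indicator_of_mem hxs, abs_of_pos ht₀]
          exact ENNReal.ofReal_le_ofReal (Real.rpow_le_rpow_of_exponent_ge ht₀ ht₁ (hb x hxs))
        · simp [indicator_of_notMem hxs, Real.zero_rpow (hp x hx).ne']
    _ ≤ ∫⁻ x, s.indicator (fun _ => ENNReal.ofReal (t ^ b)) x ∂μ := setLIntegral_le_lintegral _ _
    _ = ENNReal.ofReal (t ^ b) * μ s := lintegral_indicator_const hs _

theorem ofReal_rpow_mul_le_setLIntegral {H s : Set α} {g p : α → ℝ} {c a : ℝ}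
    (hs : MeasurableSet s) (hsH : s ⊆ H) (hc₀ : 0 < c) (hc₁ : c ≤ 1) (hp : ∀ x ∈ s, 0 ≤ p x)
    (hpa : ∀ x ∈ s, p x ≤ a) (hg : ∀ x ∈ s, c ≤ |g x|) :
    ENNReal.ofReal (c ^ a) * μ s ≤ ∫⁻ x in H, ENNReal.ofReal (|g x| ^ p x) ∂μ :=
  calc ENNReal.ofReal (c ^ a) * μ s = ∫⁻ _ in s, ENNReal.ofReal (c ^ a) ∂μ :=
        (setLIntegral_const _ _).symm
    _ ≤ ∫⁻ x in s, ENNReal.ofReal (|g x| ^ p x) ∂μ := setLIntegral_mono' hs fun x hx =>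
        ENNReal.ofReal_le_ofReal <| (Real.rpow_le_rpow_of_exponent_ge hc₀ hc₁ (hpa x hx)).trans
          (Real.rpow_le_rpow hc₀.le (hg x hx) (hp x hx))
    _ ≤ ∫⁻ x in H, ENNReal.ofReal (|g x| ^ p x) ∂μ := lintegral_mono_set hsH

def ModularInequality (μ : Measure α) (H : Set α) (K : α → α → ℝ) (p : α → ℝ) (C : ℝ) : Prop :=
  ∀ f : α → ℝ, Measurable f → (∫⁻ x in H, ENNReal.ofReal (|f x| ^ p x) ∂μ) < ⊤ →
    (∀ x ∈ H, IntegrableOn (fun y => K x y * f y) H μ) →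
    (∫⁻ x in H, ENNReal.ofReal (|∫ y in H, K x y * f y ∂μ| ^ p x) ∂μ) ≤
      ENNReal.ofReal C * ∫⁻ x in H, ENNReal.ofReal (|f x| ^ p x) ∂μ

theorem not_modularInequality_of_le_abs_setIntegral {H SA SB : Set α} {K : α → α → ℝ}
    {p : α → ℝ} {a b c : ℝ} (C : ℝ) (hab : a < b) (hH : MeasurableSet H)
    (hp : ∀ x ∈ H, 0 < p x) (hSA : MeasurableSet SA) (hSAH : SA ⊆ H) (hSA₀ : μ SA ≠ 0)
    (hSA_top : μ SA ≠ ∞) (hpa : ∀ x ∈ SA, p x ≤ a) (hSB : MeasurableSet SB) (hSBH : SB ⊆ H)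
    (hSB_top : μ SB ≠ ∞) (hpb : ∀ y ∈ SB, b ≤ p y) (hint : ∀ x ∈ H, IntegrableOn (K x) SB μ)
    (hc : 0 < c) (hK : ∀ x ∈ SA, c ≤ |∫ y in SB, K x y ∂μ|) :
    ¬ ModularInequality μ H K p C := by
  intro hmod
  have hSA_pos : 0 < μ.real SA := ENNReal.toReal_pos hSA₀ hSA_top
  have hL : 0 < c ^ a * μ.real SA := by positivity
  obtain ⟨t, hlt, ht₀, ht₁⟩ := ((eventually_mul_rpow_lt_mul_rpow hab hL (C * μ.real SB)).and
    (Ioc_mem_nhdsGT (lt_min one_pos (inv_pos.2 hc)))).exists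
  have htc : t * c ≤ 1 := by
    simpa [hc.ne'] using mul_le_mul_of_nonneg_right (ht₁.trans (min_le_right _ _)) hc.le
  set f := SB.indicator fun _ => t
  have hKf : ∀ x, (fun y => K x y * f y) = SB.indicator fun y => K x y * t := fun x =>
    funext fun y => (indicator_mul_right _ _ _).symm
  have hrhs := setLIntegral_rpow_indicator_const_le (μ := μ) hH hSB ht₀
    (ht₁.trans (min_le_left _ _)) hp hpb
  have hlhs : ENNReal.ofReal ((t * c) ^ a) * μ SA ≤
      ∫⁻ x in H, ENNReal.ofReal (|∫ y in H, K x y * f y ∂μ| ^ p x) ∂μ := by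
    refine ofReal_rpow_mul_le_setLIntegral hSA hSAH (mul_pos ht₀ hc) htc
      (fun x hx => (hp x (hSAH hx)).le) hpa fun x hx => ?_
    rw [hKf, setIntegral_indicator hSB, inter_eq_self_of_subset_right hSBH, integral_mul_const,
      abs_mul, abs_of_pos ht₀, mul_comm t c]
    exact mul_le_mul_of_nonneg_right (hK x hx) ht₀.le
  have hbound := hlhs.trans <| (hmod f (measurable_const.indicator hSB)
    (hrhs.trans_lt (ENNReal.mul_lt_top ENNReal.ofReal_lt_top hSB_top.lt_top)) fun x hx => by
      rw [hKf]
      exact ((integrable_indicator_iff hSB).2 ((hint x hx).mul_const t)).integrableOn).trans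
    (mul_le_mul_of_nonneg_left hrhs zero_le)
  refine hbound.not_gt ?_
  rw [← ofReal_measureReal hSA_top, ← ofReal_measureReal hSB_top,
    ← ENNReal.ofReal_mul (by positivity : 0 ≤ t ^ b),
    ← ENNReal.ofReal_mul (by positivity : 0 ≤ (t * c) ^ a),
    ← ENNReal.ofReal_mul' (by positivity : 0 ≤ t ^ b * μ.real SB),
    ENNReal.ofReal_lt_ofReal_iff (by positivity : 0 < (t * c) ^ a * μ.real SA),
    Real.mul_rpow ht₀.le hc.le]
  linarith

end Measure

section Support

theorem exists_mem_diff_mem_support_restrict {X : Type*} [TopologicalSpace X]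
    [HereditarilyLindelofSpace X] [MeasurableSpace X] {μ : Measure X} {s Z : Set X}
    (hs : μ s ≠ 0) (hZ : μ Z = 0) : ∃ x ∈ s \ Z, x ∈ (μ.restrict s).support := by
  apply Measure.nonempty_inter_support_of_pos
  rw [Measure.restrict_eq_self _ sdiff_subset, measure_sdiff_null hZ]
  exact pos_iff_ne_zero.2 hs

variable {X : Type*} [MetricSpace X] [MeasurableSpace X] [BorelSpace X] {μ : Measure X}

theorem measure_closedBall_inter_pos_of_mem_support_restrict {s : Set X} {z : X} {r : ℝ}
    (hz : z ∈ (μ.restrict s).support) (hr : 0 < r) : 0 < μ (Metric.closedBall z r ∩ s) := by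
  simpa [Measure.restrict_apply measurableSet_closedBall] using
    (Measure.mem_support_iff_forall _).1 hz _ (Metric.closedBall_mem_nhds _ hr)

theorem exists_subsets_le_abs_setIntegral [ProperSpace X] [IsFiniteMeasureOnCompacts μ]
    {K : X → X → ℝ} {H A B : Set X} (hH : IsOpen H)
    (hK : ContinuousOn (Function.uncurry K) (H ×ˢ H)) (hA : MeasurableSet A)
    (hB : MeasurableSet B) {x₀ y₀ : X} (hx₀ : x₀ ∈ H) (hy₀ : y₀ ∈ H)
    (hx₀A : x₀ ∈ (μ.restrict A).support) (hy₀B : y₀ ∈ (μ.restrict B).support)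
    (hK₀ : K x₀ y₀ ≠ 0) :
    ∃ SA ⊆ A, ∃ SB ⊆ B, MeasurableSet SA ∧ MeasurableSet SB ∧ μ SA ≠ 0 ∧ μ SA ≠ ∞ ∧
      μ SB ≠ ∞ ∧ (∀ x ∈ H, IntegrableOn (K x) SB μ) ∧
      ∃ c > 0, ∀ x ∈ SA, c ≤ |∫ y in SB, K x y ∂μ| := by
  set κ := K x₀ y₀
  have hκ : 0 < |κ| := abs_pos.2 hK₀
  have hHH : H ×ˢ H ∈ 𝓝 (x₀, y₀) := (hH.prod hH).mem_nhds (mk_mem_prod hx₀ hy₀)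
  have hnear : ∀ᶠ q in 𝓝 (x₀, y₀), q ∈ H ×ˢ H ∧ |Function.uncurry K q - κ| ≤ |κ| / 2 := by
    refine Filter.eventually_mem_set.2 hHH |>.and ?_
    simpa [Real.dist_eq] using
      (hK.continuousAt hHH).eventually_mem (Metric.closedBall_mem_nhds κ (half_pos hκ))
  rw [nhds_prod_eq, (Metric.nhds_basis_closedBall.prod Metric.nhds_basis_closedBall).eventually_iff]
    at hnear
  obtain ⟨⟨ρ, σ⟩, ⟨hρ, hσ⟩, hball⟩ := hnear
  have hballH : Metric.closedBall y₀ σ ⊆ H := fun y hy =>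
    (hball (mk_mem_prod (Metric.mem_closedBall_self hρ.le) hy)).1.2
  have hfin : ∀ (s : Set X) (z : X) (r : ℝ), μ (Metric.closedBall z r ∩ s) ≠ ∞ := fun _ _ _ =>
    ((measure_mono inter_subset_left).trans_lt measure_closedBall_lt_top).ne
  set SB := Metric.closedBall y₀ σ ∩ B
  have hint : ∀ x ∈ H, IntegrableOn (K x) SB μ := fun x hx =>
    ((hK.comp (Continuous.prodMk_right x).continuousOn fun y hy => ⟨hx, hballH hy⟩)
      |>.integrableOn_compact (isCompact_closedBall y₀ σ)).mono_set inter_subset_left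
  have hSB₀ := measure_closedBall_inter_pos_of_mem_support_restrict hy₀B hσ
  refine ⟨Metric.closedBall x₀ ρ ∩ A, inter_subset_right, SB, inter_subset_right,
    measurableSet_closedBall.inter hA, measurableSet_closedBall.inter hB,
    (measure_closedBall_inter_pos_of_mem_support_restrict hx₀A hρ).ne', hfin _ _ _, hfin _ _ _,
    hint, (|κ| - |κ| / 2) * μ.real SB,
    mul_pos (by linarith) (ENNReal.toReal_pos hSB₀.ne' (hfin _ _ _)), fun x hx => ?_⟩
  have hxH : x ∈ H := (hball (mk_mem_prod hx.1 (Metric.mem_closedBall_self hσ.le))).1.1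
  exact le_abs_setIntegral_of_abs_sub_le (hfin _ _ _) (hint x hxH) fun y hy =>
    (hball (mk_mem_prod hx.1 hy.1)).2

end Support

section Quadric

variable {E : Type*} [NormedAddCommGroup E] [NormedSpace ℝ E] [MeasurableSpace E] [BorelSpace E]
  [FiniteDimensional ℝ E] (μ : Measure E) [μ.IsAddHaarMeasure]

theorem addHaar_setOf_linearMap_eq {L : E →ₗ[ℝ] ℝ} (hL : L ≠ 0) (r : ℝ) :
    μ {x | L x = r} = 0 := by
  obtain ⟨v, hv⟩ : ∃ v, L v ≠ 0 := by
    by_contra! h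
    exact hL (LinearMap.ext h)
  have hset : {x | L x = r} = (AffineSubspace.mk' ((r / L v) • v) (LinearMap.ker L) : Set E) := by
    ext x
    simp [AffineSubspace.mem_mk', sub_eq_zero, hv]
  rw [hset]
  refine Measure.addHaar_affineSubspace μ _ fun htop => hL ?_
  rw [← LinearMap.ker_eq_top, ← AffineSubspace.direction_mk' ((r / L v) • v) (LinearMap.ker L),
    htop, AffineSubspace.direction_top]

variable {F : Type*} [NormedAddCommGroup F] [InnerProductSpace ℝ F] [MeasurableSpace F]
  [BorelSpace F] [FiniteDimensional ℝ F] (ν : Measure F) [ν.IsAddHaarMeasure]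

theorem addHaar_setOf_inner_eq {w : F} (hw : w ≠ 0) (r : ℝ) : ν {x | ⟪w, x⟫_ℝ = r} = 0 :=
  addHaar_setOf_linearMap_eq ν (L := innerₛₗ ℝ w)
    (fun h => hw (inner_self_eq_zero.1 (LinearMap.congr_fun h w))) r

/-- The difference of the two quadratics is affine in `x`, with linear part
`2 (u - v) - 2 c ⟪e, u - v⟫ e`; its `e`-component is `2 (1 - c) ⟪e, u - v⟫`, so it vanishes only
if `u = v`. -/
theorem addHaar_setOf_cone_sub_eq_cone_sub {c : ℝ} (hc : c ≠ 1) {e : F} (he : ‖e‖ = 1)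
    {u v : F} (huv : u ≠ v) :
    ν {x | c * ⟪e, x - u⟫_ℝ ^ 2 - ‖x - u‖ ^ 2 = c * ⟪e, x - v⟫_ℝ ^ 2 - ‖x - v‖ ^ 2} = 0 := by
  set w : F := (2 : ℝ) • (u - v) - (2 * c * ⟪e, u - v⟫_ℝ) • e
  have hw : w ≠ 0 := by
    intro hw0
    have hew : 2 * (1 - c) * ⟪e, u - v⟫_ℝ = 0 := by
      rw [← inner_zero_right e, ← hw0]
      simp only [w, inner_sub_right, inner_smul_right, real_inner_self_eq_norm_sq, he]
      ring
    have heuv : ⟪e, u - v⟫_ℝ = 0 := by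
      simpa [sub_eq_zero, Ne.symm hc] using hew
    simp [w, heuv, sub_eq_zero, huv] at hw0
  convert addHaar_setOf_inner_eq ν hw
    (c * (⟪e, v⟫_ℝ ^ 2 - ⟪e, u⟫_ℝ ^ 2) + ‖u‖ ^ 2 - ‖v‖ ^ 2) using 2
  ext x
  simp only [mem_ofPred_eq, w, inner_sub_right, inner_sub_left, inner_smul_left, norm_sub_sq_real,
    RCLike.conj_to_real, real_inner_comm u x, real_inner_comm v x]
  constructor <;> intro h <;> linear_combination h

end Quadric

section HalfSpace

@[fun_prop]
theorem continuous_lastCoord {n : ℕ} : Continuous (lastCoord (n := n)) := by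
  unfold lastCoord
  split_ifs <;> fun_prop

@[fun_prop]
theorem continuous_reflectLast {n : ℕ} : Continuous (reflectLast (n := n)) := by
  refine (PiLp.continuous_toLp 2 _).comp (continuous_pi fun i => ?_)
  split_ifs <;> fun_prop

theorem isOpen_upperHalfSpace (n : ℕ) : IsOpen (upperHalfSpace n) :=
  isOpen_lt continuous_const continuous_lastCoord

variable {n : ℕ} [NeZero n]

def lastIdx (n : ℕ) [NeZero n] : Fin n :=
  ⟨n - 1, Nat.sub_lt (NeZero.pos n) one_pos⟩

theorem lastCoord_eq_apply (x : EuclideanSpace ℝ (Fin n)) : lastCoord x = x (lastIdx n) :=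
  dif_pos (lastIdx n).isLt

def lastVec (n : ℕ) [NeZero n] : EuclideanSpace ℝ (Fin n) :=
  EuclideanSpace.single (lastIdx n) 1

theorem inner_lastVec (x : EuclideanSpace ℝ (Fin n)) : ⟪lastVec n, x⟫_ℝ = lastCoord x := by
  rw [lastVec, EuclideanSpace.inner_single_left, lastCoord_eq_apply]
  simp

theorem norm_lastVec : ‖lastVec n‖ = 1 := by simp [lastVec]

theorem reflectLast_eq (y : EuclideanSpace ℝ (Fin n)) :
    reflectLast y = y - (2 * lastCoord y) • lastVec n := by
  ext i
  by_cases hi : i = lastIdx n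
  · subst hi
    simp [reflectLast, lastVec, lastCoord_eq_apply, lastIdx]
    ring
  · have hi' : (i : ℕ) ≠ n - 1 := fun h => hi (Fin.ext h)
    simp [reflectLast, lastVec, hi, hi']

theorem lastCoord_reflectLast (y : EuclideanSpace ℝ (Fin n)) :
    lastCoord (reflectLast y) = -lastCoord y := by
  rw [← inner_lastVec, ← inner_lastVec, reflectLast_eq, inner_sub_right, inner_smul_right,
    real_inner_self_eq_norm_sq, norm_lastVec, inner_lastVec]
  ring

theorem reflectLast_reflectLast (y : EuclideanSpace ℝ (Fin n)) :
    reflectLast (reflectLast y) = y := by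
  rw [reflectLast_eq (reflectLast y), lastCoord_reflectLast, reflectLast_eq]
  module

theorem reflectLast_injective : Function.Injective (reflectLast (n := n)) :=
  Function.LeftInverse.injective reflectLast_reflectLast

theorem ne_reflectLast_of_mem_upperHalfSpace {x y : EuclideanSpace ℝ (Fin n)}
    (hx : x ∈ upperHalfSpace n) (hy : y ∈ upperHalfSpace n) : x ≠ reflectLast y := fun h => by
  have hlast := congrArg lastCoord h
  rw [lastCoord_reflectLast] at hlast
  linarith [show 0 < lastCoord x from hx, show 0 < lastCoord y from hy]

end HalfSpace

section Kernel

variable {n : ℕ} [NeZero n]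

theorem lastCoord_add_lastCoord (x y : EuclideanSpace ℝ (Fin n)) :
    lastCoord x + lastCoord y = ⟪lastVec n, x - reflectLast y⟫_ℝ := by
  rw [inner_sub_right, inner_lastVec, inner_lastVec, lastCoord_reflectLast, sub_neg_eq_add]

theorem harmonicKernel_eq_zero_iff {x y : EuclideanSpace ℝ (Fin n)} :
    harmonicKernel x y = 0 ↔
      n * ⟪lastVec n, x - reflectLast y⟫_ℝ ^ 2 - ‖x - reflectLast y‖ ^ 2 = 0 := by
  have hconst : 2 / Real.pi ^ ((n : ℝ) / 2) * Real.Gamma ((n : ℝ) / 2) ≠ 0 := by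
    have : (0 : ℝ) < n := by exact_mod_cast NeZero.pos n
    have := Real.Gamma_pos_of_pos (by positivity : (0 : ℝ) < n / 2)
    positivity
  rw [harmonicKernel, lastCoord_add_lastCoord, mul_eq_zero, or_iff_right hconst, div_eq_zero_iff,
    pow_eq_zero_iff (by omega), norm_eq_zero]
  refine ⟨?_, Or.inl⟩
  rintro (h | h)
  · exact h
  · -- at `x = ȳ` the division is by zero, but the numerator vanishes there as well
    simp [h]

theorem volume_setOf_harmonicKernel_eq_zero_and_eq_zero (hn : 2 ≤ n)
    {y₁ y₂ : EuclideanSpace ℝ (Fin n)} (h : y₁ ≠ y₂) :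
    volume {x | harmonicKernel x y₁ = 0 ∧ harmonicKernel x y₂ = 0} = 0 := by
  refine measure_mono_null (fun x hx => ?_) (addHaar_setOf_cone_sub_eq_cone_sub volume
    (c := n) (by exact_mod_cast (by omega : n ≠ 1)) norm_lastVec (reflectLast_injective.ne h))
  simp only [mem_ofPred_eq, harmonicKernel_eq_zero_iff] at hx ⊢
  rw [hx.1, hx.2]

theorem continuousOn_harmonicKernel :
    ContinuousOn (Function.uncurry harmonicKernel) (upperHalfSpace n ×ˢ upperHalfSpace n) := by
  refine continuousOn_const.mul (ContinuousOn.div (by fun_prop) (by fun_prop) ?_)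
  rintro ⟨x, y⟩ ⟨hx, hy⟩
  exact pow_ne_zero _
    (norm_ne_zero_iff.2 (sub_ne_zero.2 (ne_reflectLast_of_mem_upperHalfSpace hx hy)))

theorem exists_mem_support_harmonicKernel_ne_zero (hn : 2 ≤ n)
    {A B : Set (EuclideanSpace ℝ (Fin n))} (hA : volume A ≠ 0) (hB : volume B ≠ 0) :
    ∃ x₀ ∈ A, ∃ y₀ ∈ B, x₀ ∈ (volume.restrict A).support ∧
      y₀ ∈ (volume.restrict B).support ∧ harmonicKernel x₀ y₀ ≠ 0 := by
  obtain ⟨y₁, ⟨hy₁B, -⟩, hy₁⟩ := exists_mem_diff_mem_support_restrict hB measure_empty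
  obtain ⟨y₂, ⟨hy₂B, hy₂₁⟩, hy₂⟩ := exists_mem_diff_mem_support_restrict hB (measure_singleton y₁)
  obtain ⟨x₀, ⟨hx₀A, hx₀Z⟩, hx₀⟩ := exists_mem_diff_mem_support_restrict hA
    (volume_setOf_harmonicKernel_eq_zero_and_eq_zero hn fun h => hy₂₁ h.symm)
  by_cases h₁ : harmonicKernel x₀ y₁ = 0
  · exact ⟨x₀, hx₀A, y₂, hy₂B, hx₀, hy₂, fun h₂ => hx₀Z ⟨h₁, h₂⟩⟩
  · exact ⟨x₀, hx₀A, y₁, hy₁B, hx₀, hy₁, h₁⟩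

end Kernel

theorem modular_inequality_harmonicBergman_implies_constant_exponent_general
    (n : ℕ) (hn : 2 ≤ n)
    (p : EuclideanSpace ℝ (Fin n) → ℝ) (hpm : Measurable p)
    (hp1 : ∀ x ∈ upperHalfSpace n, 1 ≤ p x)
    (C : ℝ)
    (hmod : ∀ f : EuclideanSpace ℝ (Fin n) → ℝ, Measurable f →
      (∫⁻ x in upperHalfSpace n, ENNReal.ofReal (|f x| ^ p x)) < ⊤ →
      (∀ x ∈ upperHalfSpace n,
        IntegrableOn (fun y => harmonicKernel x y * f y) (upperHalfSpace n)) →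
      (∫⁻ x in upperHalfSpace n, ENNReal.ofReal (|harmonicBergman f x| ^ p x))
        ≤ ENNReal.ofReal C *
          ∫⁻ x in upperHalfSpace n, ENNReal.ofReal (|f x| ^ p x)) :
    ∃ c : ℝ, ∀ᵐ x ∂(volume.restrict (upperHalfSpace n)), p x = c := by
  have : NeZero n := ⟨by omega⟩
  have hH := isOpen_upperHalfSpace n
  by_contra hconst
  obtain ⟨a, b, hab, hA₀, hB₀⟩ := exists_lt_measure_lt_ne_zero_of_not_ae_eq_const hconst
  have hA : MeasurableSet {x | p x < a} := measurableSet_lt hpm measurable_const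
  have hB : MeasurableSet {x | b < p x} := measurableSet_lt measurable_const hpm
  rw [Measure.restrict_apply hA] at hA₀
  rw [Measure.restrict_apply hB] at hB₀
  obtain ⟨x₀, hx₀, y₀, hy₀, hx₀A, hy₀B, hK₀⟩ := exists_mem_support_harmonicKernel_ne_zero hn hA₀ hB₀
  obtain ⟨SA, hSA_A, SB, hSB_B, hSA, hSB, hSA₀, hSA_top, hSB_top, hint, c, hc, hK⟩ :=
    exists_subsets_le_abs_setIntegral hH continuousOn_harmonicKernel
      (hA.inter hH.measurableSet) (hB.inter hH.measurableSet) hx₀.2 hy₀.2 hx₀A hy₀B hK₀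
  exact not_modularInequality_of_le_abs_setIntegral C hab hH.measurableSet
    (fun x hx => one_pos.trans_le (hp1 x hx)) hSA (fun x hx => (hSA_A hx).2) hSA₀ hSA_top
    (fun x hx => (hSA_A hx).1.le) hSB (fun y hy => (hSB_B hy).2) hSB_top
    (fun y hy => (hSB_B hy).1.le) hint hc hK hmod

theorem modular_inequality_harmonicBergman_implies_constant_exponent
    (n : ℕ) (hn : 2 ≤ n)
    (p : EuclideanSpace ℝ (Fin n) → ℝ) (hpm : Measurable p)
    (hp1 : ∀ x ∈ upperHalfSpace n, 1 ≤ p x)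
    (hinf : 1 < essInf p (volume.restrict (upperHalfSpace n)))
    (hsup : ∃ M : ℝ, ∀ᵐ x ∂(volume.restrict (upperHalfSpace n)), p x ≤ M)
    (C : ℝ) (hC : 0 < C)
    (hmod : ∀ f : EuclideanSpace ℝ (Fin n) → ℝ, Measurable f →
      (∫⁻ x in upperHalfSpace n, ENNReal.ofReal (|f x| ^ p x)) < ⊤ →
      (∀ x ∈ upperHalfSpace n,
        IntegrableOn (fun y => harmonicKernel x y * f y) (upperHalfSpace n)) →
      (∫⁻ x in upperHalfSpace n, ENNReal.ofReal (|harmonicBergman f x| ^ p x))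
        ≤ ENNReal.ofReal C *
          ∫⁻ x in upperHalfSpace n, ENNReal.ofReal (|f x| ^ p x)) :
    ∃ c : ℝ, ∀ᵐ x ∂(volume.restrict (upperHalfSpace n)), p x = c :=
  modular_inequality_harmonicBergman_implies_constant_exponent_general n hn p hpm hp1 C hmod

end
end
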